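/- arXiv:2306.14543 — 5 statements merged into one kernel-verified Lean document; each statement's English description precedes it below -/
import Mathlib

section
/- Let I be a finite index set and for each i ∈ I let (c_i, d_i) ∈ ℝⁿ × ℝ^m. Let Y := {(x, u) ∈ ℝⁿ × ℝ^m : ∀ i ∈ I, ⟨c_i, x⟩ + ⟨d_i, u⟩ ≤ 1}, let S be a nonempty compact subset of ℝⁿ, let K be a real m×n matrix, and define Y_S := {(z, v) ∈ ℝⁿ × ℝ^m : ∀ s ∈ S, (z + s, v + K s) ∈ Y}. Then Y_S = {(z, v) ∈ ℝⁿ × ℝ^m : ∀ i ∈ I, ⟨c_i, z⟩ + ⟨d_i, v⟩ ≤ 1 − σ_S(c_i + Kᵀ d_i)}. (Proposition 3.1, representation part) -/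
open Matrix Pointwise

/-- The support function of a nonempty set `S ⊆ ℝⁿ` evaluated at `y`:
`σ_S(y) = sup_{s ∈ S} ⟨y, s⟩`. -/
noncomputable def suppFn {n : ℕ} (S : Set (Fin n → ℝ)) (y : Fin n → ℝ) : ℝ :=
  sSup ((fun s => y ⬝ᵥ s) '' S)

theorem dotProduct_add_add_dotProduct_mulVec_add {n m : ℕ} {R : Type*} [CommRing R]
    (c x s : Fin n → R) (d u : Fin m → R) (K : Matrix (Fin m) (Fin n) R) :
    c ⬝ᵥ (x + s) + d ⬝ᵥ (u + K *ᵥ s) = c ⬝ᵥ x + d ⬝ᵥ u + (c + Kᵀ *ᵥ d) ⬝ᵥ s := by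
  rw [dotProduct_add, dotProduct_add, add_dotProduct, dotProduct_mulVec, mulVec_transpose]
  ring

theorem suppFn_le_iff {n : ℕ} {S : Set (Fin n → ℝ)} (hne : S.Nonempty) (hcpt : IsCompact S)
    (y : Fin n → ℝ) (b : ℝ) : suppFn S y ≤ b ↔ ∀ s ∈ S, y ⬝ᵥ s ≤ b := by
  have hbdd : BddAbove ((fun s => y ⬝ᵥ s) '' S) :=
    (hcpt.image (continuous_const.dotProduct continuous_id)).bddAbove
  rw [suppFn, csSup_le_iff hbdd (hne.image _), Set.forall_mem_image]

theorem tightened_set_representation_general {n m : ℕ} {ι : Type}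
    (c : ι → Fin n → ℝ) (d : ι → Fin m → ℝ)
    (Y : Set ((Fin n → ℝ) × (Fin m → ℝ)))
    (hY : Y = {p : (Fin n → ℝ) × (Fin m → ℝ) | ∀ i, c i ⬝ᵥ p.1 + d i ⬝ᵥ p.2 ≤ 1})
    (S : Set (Fin n → ℝ)) (hSne : S.Nonempty) (hScp : IsCompact S)
    (K : Matrix (Fin m) (Fin n) ℝ) :
    {p : (Fin n → ℝ) × (Fin m → ℝ) | ∀ s ∈ S, (p.1 + s, p.2 + K.mulVec s) ∈ Y} =
      {p : (Fin n → ℝ) × (Fin m → ℝ) |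
        ∀ i, c i ⬝ᵥ p.1 + d i ⬝ᵥ p.2 ≤ 1 - suppFn S (c i + Kᵀ.mulVec (d i))} := by
  subst hY
  ext p
  simp only [Set.mem_ofPred_eq, dotProduct_add_add_dotProduct_mulVec_add, le_sub_comm (a := _ + _),
    suppFn_le_iff hSne hScp, le_sub_iff_add_le']
  exact ⟨fun h i s hs => h s hs i, fun h s hs i => h i s hs⟩

/-- Proposition 3.1 (representation part): the tightened constraint set `Y_S`
admits the explicit polyhedral representation via support function offsets. -/
theorem tightened_set_representation {n m : ℕ} {ι : Type} [Fintype ι]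
    (c : ι → Fin n → ℝ) (d : ι → Fin m → ℝ)
    (Y : Set ((Fin n → ℝ) × (Fin m → ℝ)))
    (hY : Y = {p : (Fin n → ℝ) × (Fin m → ℝ) | ∀ i, c i ⬝ᵥ p.1 + d i ⬝ᵥ p.2 ≤ 1})
    (S : Set (Fin n → ℝ)) (hSne : S.Nonempty) (hScp : IsCompact S)
    (K : Matrix (Fin m) (Fin n) ℝ) :
    {p : (Fin n → ℝ) × (Fin m → ℝ) | ∀ s ∈ S, (p.1 + s, p.2 + K.mulVec s) ∈ Y} =
      {p : (Fin n → ℝ) × (Fin m → ℝ) |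
        ∀ i, c i ⬝ᵥ p.1 + d i ⬝ᵥ p.2 ≤ 1 - suppFn S (c i + Kᵀ.mulVec (d i))} :=
  tightened_set_representation_general c d Y hY S hSne hScp K
end

section
/- Let W be a compact convex subset of ℝⁿ containing the origin, let M be a real n×n matrix, let α ∈ [0, 1), and let N ≥ 1 be a finite natural number such that M^N W ⊆ α W. Then the set S := (1 − α)^{-1} ⊕_{k=0}^{N − 1} M^k W is robust positively invariant for the dynamics s⁺ = M s + w with w ∈ W, i.e., M S ⊕ W ⊆ S. (Theorem 1 of Raković–Kerrigan–Kouramas–Mayne, used in Section 3.3 to guarantee rigid tube dynamical consistency) -/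
open Matrix Pointwise

/-!
With `F = ∑_{k<N} f^k W` one has
`f F + (1 - α) W = ∑_{1≤k<N} f^k W + f^N W + (1 - α) W ⊆ ∑_{1≤k<N} f^k W + α W + (1 - α) W`,
and by convexity `α W + (1 - α) W = W = f^0 W`, so the right-hand side is `F` again.
Scaling by `(1 - α)⁻¹` turns `f F + (1 - α) W ⊆ F` into `f S + W ⊆ S`.
-/

namespace Module.End

theorem image_sum_range_pow_image {R E : Type*} [Semiring R] [AddCommMonoid E] [Module R E]
    (f : Module.End R E) (W : Set E) (m : ℕ) :
    f '' ∑ k ∈ Finset.range m, (f ^ k) '' W = ∑ k ∈ Finset.range m, (f ^ (k + 1)) '' W := by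
  simp only [Set.image_finsetSum, ← Set.image_comp, pow_succ', mul_eq_comp, LinearMap.coe_comp]

variable {𝕜 E : Type*} [Field 𝕜] [LinearOrder 𝕜] [IsStrictOrderedRing 𝕜]
  [AddCommGroup E] [Module 𝕜 E]

theorem image_sum_range_pow_image_add_smul_subset (f : Module.End 𝕜 E) {W : Set E}
    (hW : Convex 𝕜 W) {α : 𝕜} (hα0 : 0 ≤ α) (hα1 : α ≤ 1) {N : ℕ} (hN : 1 ≤ N)
    (hfN : (f ^ N) '' W ⊆ α • W) :
    f '' ∑ k ∈ Finset.range N, (f ^ k) '' W + (1 - α) • W ⊆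
      ∑ k ∈ Finset.range N, (f ^ k) '' W := by
  obtain ⟨m, rfl⟩ : ∃ m, N = m + 1 := ⟨N - 1, by omega⟩
  rw [image_sum_range_pow_image, Finset.sum_range_succ, Finset.sum_range_succ', pow_zero,
    one_eq_id, LinearMap.id_coe, Set.image_id]
  calc ∑ k ∈ Finset.range m, (f ^ (k + 1)) '' W + (f ^ (m + 1)) '' W + (1 - α) • W
      ⊆ ∑ k ∈ Finset.range m, (f ^ (k + 1)) '' W + α • W + (1 - α) • W := by gcongr
    _ = ∑ k ∈ Finset.range m, (f ^ (k + 1)) '' W + W := by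
      rw [add_assoc, ← hW.add_smul hα0 (sub_nonneg.2 hα1), add_sub_cancel, one_smul]

theorem image_smul_sum_range_pow_image_add_subset (f : Module.End 𝕜 E) {W : Set E}
    (hW : Convex 𝕜 W) {α : 𝕜} (hα0 : 0 ≤ α) (hα1 : α < 1) {N : ℕ} (hN : 1 ≤ N)
    (hfN : (f ^ N) '' W ⊆ α • W) :
    f '' ((1 - α)⁻¹ • ∑ k ∈ Finset.range N, (f ^ k) '' W) + W ⊆
      (1 - α)⁻¹ • ∑ k ∈ Finset.range N, (f ^ k) '' W := by
  have hα : 1 - α ≠ 0 := sub_ne_zero.2 hα1.ne'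
  calc f '' ((1 - α)⁻¹ • ∑ k ∈ Finset.range N, (f ^ k) '' W) + W
      = (1 - α)⁻¹ • (f '' ∑ k ∈ Finset.range N, (f ^ k) '' W + (1 - α) • W) := by
        rw [image_smul_set, smul_add, smul_smul, inv_mul_cancel₀ hα, one_smul]
    _ ⊆ (1 - α)⁻¹ • ∑ k ∈ Finset.range N, (f ^ k) '' W :=
      Set.smul_set_mono <|
        image_sum_range_pow_image_add_smul_subset f hW hα0 hα1.le hN hfN

end Module.End

theorem rpi_shape_set_general {n : ℕ} (W : Set (Fin n → ℝ))
    (hWconv : Convex ℝ W)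
    (M : Matrix (Fin n) (Fin n) ℝ) (α : ℝ) (hα0 : 0 ≤ α) (hα1 : α < 1)
    (N : ℕ) (hN : 1 ≤ N)
    (hMN : (fun w => (M ^ N).mulVec w) '' W ⊆ α • W)
    (S : Set (Fin n → ℝ))
    (hS : S = (1 - α)⁻¹ • ∑ k ∈ Finset.range N, (fun w => (M ^ k).mulVec w) '' W) :
    (fun s => M.mulVec s) '' S + W ⊆ S := by
  have hfN : (M.toLin' ^ N) '' W ⊆ α • W := by rwa [← toLin'_pow]
  subst hS
  have h := Module.End.image_smul_sum_range_pow_image_add_subset M.toLin' hWconv hα0 hα1 hN hfN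
  simp only [← toLin'_pow] at h
  exact h

/-- Theorem 1 of Raković–Kerrigan–Kouramas–Mayne: if `M^N W ⊆ α W` then
`S = (1-α)⁻¹ ⊕_{k=0}^{N-1} M^k W` is robust positively invariant for
`s⁺ = M s + w`, `w ∈ W`, i.e., `M S ⊕ W ⊆ S`. -/
theorem rpi_shape_set {n : ℕ} (W : Set (Fin n → ℝ))
    (hWcp : IsCompact W) (hWconv : Convex ℝ W) (h0 : (0 : Fin n → ℝ) ∈ W)
    (M : Matrix (Fin n) (Fin n) ℝ) (α : ℝ) (hα0 : 0 ≤ α) (hα1 : α < 1)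
    (N : ℕ) (hN : 1 ≤ N)
    (hMN : (fun w => (M ^ N).mulVec w) '' W ⊆ α • W)
    (S : Set (Fin n → ℝ))
    (hS : S = (1 - α)⁻¹ • ∑ k ∈ Finset.range N, (fun w => (M ^ k).mulVec w) '' W) :
    (fun s => M.mulVec s) '' S + W ⊆ S :=
  rpi_shape_set_general W hWconv M α hα0 hα1 N hN hMN S hS
end

section
/- Let Z be a subset of ℝⁿ, let C be a real n×n matrix, and let N ∈ ℕ be such that ⋂_{k=0}^{N} C^{-k} Z ⊆ C^{-(N+1)} Z. Then the set Z_f := ⋂_{k=0}^{N} C^{-k} Z satisfies: (i) Z_f is positively invariant for the dynamics z⁺ = C z, i.e., C Z_f ⊆ Z_f; and (ii) Z_f = ⋂_{k=0}^{∞} C^{-k} Z, i.e., Z_f is finitely determined. (Finite determination and positive invariance of the terminal constraint set Z_f under condition (2.17)) -/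
/-!
Write `Z_N = ⋂_{k ≤ N} f^{-k} Z` for the dynamics `f`. Then `f⁻¹ Z_N = ⋂_{1 ≤ k ≤ N+1} f^{-k} Z`
contains `Z_{N+1}`; the hypothesis says `Z_N = Z_{N+1}`, hence `Z_N` is forward invariant.
A forward invariant subset of `Z` lies in every `f^{-k} Z`, which gives finite determination.
-/

namespace Function

variable {α : Type*} (f : α → α) (Z : Set α)

theorem iInter_range_succ_preimage_iterate_subset (N : ℕ) :
    (⋂ k ∈ Finset.range (N + 2), f^[k] ⁻¹' Z) ⊆
      f ⁻¹' ⋂ k ∈ Finset.range (N + 1), f^[k] ⁻¹' Z := by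
  intro y hy
  simp only [Set.mem_preimage, Set.mem_iInter, Finset.mem_range] at hy ⊢
  intro k hk
  simpa only [← iterate_succ_apply] using hy (k + 1) (by omega)

variable {f Z}

theorem mapsTo_iInter_range_preimage_iterate {N : ℕ}
    (h : (⋂ k ∈ Finset.range (N + 1), f^[k] ⁻¹' Z) ⊆ f^[N + 1] ⁻¹' Z) :
    Set.MapsTo f (⋂ k ∈ Finset.range (N + 1), f^[k] ⁻¹' Z)
      (⋂ k ∈ Finset.range (N + 1), f^[k] ⁻¹' Z) := by
  have h_succ : (⋂ k ∈ Finset.range (N + 1), f^[k] ⁻¹' Z) ⊆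
      ⋂ k ∈ Finset.range (N + 2), f^[k] ⁻¹' Z := by
    rw [Finset.range_add_one (n := N + 1), Finset.set_biInter_insert]
    exact Set.subset_inter h le_rfl
  exact h_succ.trans (iInter_range_succ_preimage_iterate_subset f Z N)

theorem subset_iInter_preimage_iterate_of_mapsTo {s : Set α} (hsZ : s ⊆ Z)
    (hs : Set.MapsTo f s s) : s ⊆ ⋂ k : ℕ, f^[k] ⁻¹' Z :=
  fun _ hy => Set.mem_iInter.2 fun k => hsZ (hs.iterate k hy)

theorem iInter_range_preimage_iterate_eq_iInter {N : ℕ}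
    (h : (⋂ k ∈ Finset.range (N + 1), f^[k] ⁻¹' Z) ⊆ f^[N + 1] ⁻¹' Z) :
    (⋂ k ∈ Finset.range (N + 1), f^[k] ⁻¹' Z) = ⋂ k : ℕ, f^[k] ⁻¹' Z := by
  refine (Set.iInter_subset_iInter₂ _ _).antisymm' ?_
  refine subset_iInter_preimage_iterate_of_mapsTo ?_ (mapsTo_iInter_range_preimage_iterate h)
  exact Set.biInter_subset_of_mem (Finset.mem_range.2 N.succ_pos)

end Function

theorem Matrix.mulVec_pow_eq_iterate {n : Type*} [Fintype n] [DecidableEq n] {R : Type*}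
    [CommSemiring R] (C : Matrix n n R) (k : ℕ) : (C ^ k).mulVec = C.mulVec^[k] := by
  induction k with
  | zero => exact funext one_mulVec
  | succ k ih =>
    rw [pow_succ, Function.iterate_succ, ← ih]
    exact funext fun v => (mulVec_mulVec _ _ _).symm

/-- Finite determination and positive invariance of the terminal constraint set `Z_f`
under condition (2.17): if `⋂_{k=0}^{N} C^{-k} Z ⊆ C^{-(N+1)} Z`, then
`Z_f = ⋂_{k=0}^{N} C^{-k} Z` satisfies `C Z_f ⊆ Z_f` and
`Z_f = ⋂_{k=0}^{∞} C^{-k} Z`. -/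
theorem terminal_set_finitely_determined {n : ℕ} (Z : Set (Fin n → ℝ))
    (C : Matrix (Fin n) (Fin n) ℝ) (N : ℕ)
    (h : (⋂ k ∈ Finset.range (N + 1), (C ^ k).mulVec ⁻¹' Z) ⊆
      (C ^ (N + 1)).mulVec ⁻¹' Z) :
    ((fun z => C.mulVec z) '' (⋂ k ∈ Finset.range (N + 1), (C ^ k).mulVec ⁻¹' Z) ⊆
        ⋂ k ∈ Finset.range (N + 1), (C ^ k).mulVec ⁻¹' Z) ∧
      (⋂ k ∈ Finset.range (N + 1), (C ^ k).mulVec ⁻¹' Z) =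
        ⋂ k : ℕ, (C ^ k).mulVec ⁻¹' Z := by
  simp only [Matrix.mulVec_pow_eq_iterate] at h ⊢
  exact ⟨(Function.mapsTo_iInter_range_preimage_iterate h).image_subset,
    Function.iInter_range_preimage_iterate_eq_iInter h⟩
end

section
/- Let A be a real n×n matrix, B a real n×m matrix, K a real m×n matrix, and let S, W ⊆ ℝⁿ and Y ⊆ ℝⁿ × ℝ^m be sets such that (A + B K) S ⊕ W ⊆ S. Define Y_S := {(z, v) ∈ ℝⁿ × ℝ^m : ∀ s ∈ S, (z + s, v + K s) ∈ Y}. Suppose x ∈ ℝⁿ, z ∈ ℝⁿ and v ∈ ℝ^m satisfy x − z ∈ S and (z, v) ∈ Y_S, and set u := v + K (x − z). Then (x, u) ∈ Y, and for every w ∈ W, the successor state x⁺ := A x + B u + w satisfies x⁺ − (A z + B v) ∈ S. (Core robust constraint satisfaction and tube dynamical consistency step used in the proof of Theorem 4.2) -/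
open Matrix Pointwise

theorem Matrix.mulVec_feedback_sub_nominal {R ι κ : Type*} [Ring R] [Fintype ι] [Fintype κ]
    (A : Matrix ι ι R) (B : Matrix ι κ R) (K : Matrix κ ι R) (x z w : ι → R) (v : κ → R) :
    A *ᵥ x + B *ᵥ (v + K *ᵥ (x - z)) + w - (A *ᵥ z + B *ᵥ v) = (A + B * K) *ᵥ (x - z) + w := by
  simp only [add_mulVec, mulVec_add, mulVec_sub, mulVec_mulVec]
  abel

/-- Core robust constraint satisfaction and tube dynamical consistency step used in
the proof of Theorem 4.2: if `(A + BK) S ⊕ W ⊆ S`, `x - z ∈ S` and `(z, v) ∈ Y_S`,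
then with `u = v + K (x - z)` one has `(x, u) ∈ Y` and, for every `w ∈ W`, the
successor `x⁺ = A x + B u + w` satisfies `x⁺ - (A z + B v) ∈ S`. -/
theorem tube_consistency_step {n m : ℕ}
    (A : Matrix (Fin n) (Fin n) ℝ) (B : Matrix (Fin n) (Fin m) ℝ)
    (K : Matrix (Fin m) (Fin n) ℝ)
    (S W : Set (Fin n → ℝ)) (Y : Set ((Fin n → ℝ) × (Fin m → ℝ)))
    (hinv : (fun s => (A + B * K).mulVec s) '' S + W ⊆ S)
    (x z : Fin n → ℝ) (v : Fin m → ℝ)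
    (hxz : x - z ∈ S)
    (hzv : (z, v) ∈ {p : (Fin n → ℝ) × (Fin m → ℝ) |
      ∀ s ∈ S, (p.1 + s, p.2 + K.mulVec s) ∈ Y}) :
    (x, v + K.mulVec (x - z)) ∈ Y ∧
      ∀ w ∈ W,
        (A.mulVec x + B.mulVec (v + K.mulVec (x - z)) + w) -
          (A.mulVec z + B.mulVec v) ∈ S := by
  refine ⟨by simpa only [add_sub_cancel] using hzv (x - z) hxz, fun w hw => ?_⟩
  rw [mulVec_feedback_sub_nominal]
  exact hinv (Set.add_mem_add (Set.mem_image_of_mem _ hxz) hw)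
end

section
/- Let P be a nonempty convex subset of ℝⁿ, let f : ℝⁿ → ℝ^m be continuous on P, and suppose there exist finitely many closed sets C₁, …, C_r ⊆ ℝⁿ, affine maps g₁, …, g_r : ℝⁿ → ℝ^m, and Lipschitz constants L₁, …, L_r ≥ 0 such that P ⊆ ⋃_{i=1}^{r} C_i, each g_i is Lipschitz with constant L_i, and f(x) = g_i(x) for every x ∈ C_i ∩ P. Then f is Lipschitz continuous on P with Lipschitz constant max_i L_i. (Continuous piecewise affine functions on a convex polyhedral domain are Lipschitz; the fact underlying Corollary 4.1) -/
/-!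
A function that is `K`-Lipschitz on each piece of a finite closed cover satisfies, at every
point `x`, the bound `dist (f y) (f x) ≤ K * dist y x` for all nearby `y`, because near `x`
every piece containing `y` also contains `x`. Along a segment this pointwise bound (which also
makes the function continuous there) propagates by continuous induction to a global one, so on
a convex set it yields `K`-Lipschitz continuity.
-/

open Set Filter Topology NNReal

theorem eventually_dist_le_of_finite_closed_cover {X Y ι : Type*} [PseudoMetricSpace X]
    [PseudoMetricSpace Y] [Finite ι] {f : X → Y} {s : Set X} {C : ι → Set X} {K : ℝ≥0}
    (hC : ∀ i, IsClosed (C i)) (hcover : s ⊆ ⋃ i, C i)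
    (hf : ∀ i, LipschitzOnWith K f (C i ∩ s)) {x : X} (hx : x ∈ s) :
    ∀ᶠ y in 𝓝[s] x, dist (f y) (f x) ≤ K * dist y x := by
  filter_upwards [nhdsWithin_le_nhds ((locallyFinite_of_finite C).eventually_subset hC x),
    self_mem_nhdsWithin] with y hsub hy
  obtain ⟨i, hyi⟩ := mem_iUnion.1 (hcover hy)
  exact (hf i).dist_le_mul y ⟨hyi, hy⟩ x ⟨hsub hyi, hx⟩

theorem continuousWithinAt_of_eventually_dist_le {X Y : Type*} [PseudoMetricSpace X]
    [PseudoMetricSpace Y] {f : X → Y} {s : Set X} {x : X} (K : ℝ)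
    (h : ∀ᶠ y in 𝓝[s] x, dist (f y) (f x) ≤ K * dist y x) : ContinuousWithinAt f s x := by
  refine tendsto_iff_dist_tendsto_zero.2 (squeeze_zero' (.of_forall fun _ => dist_nonneg) h ?_)
  exact (Continuous.tendsto' (by fun_prop) x 0 (by simp)).mono_left nhdsWithin_le_nhds

theorem dist_le_mul_of_eventually_dist_le {Y : Type*} [PseudoMetricSpace Y] {φ : ℝ → Y}
    {a b K : ℝ} (hab : a ≤ b)
    (hφ : ∀ t ∈ Icc a b, ∀ᶠ s in 𝓝[Icc a b] t, dist (φ s) (φ t) ≤ K * dist s t) :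
    dist (φ b) (φ a) ≤ K * (b - a) := by
  have hcont : ContinuousOn φ (Icc a b) := fun t ht =>
    continuousWithinAt_of_eventually_dist_le K (hφ t ht)
  set S := {t | dist (φ t) (φ a) ≤ K * (t - a)}
  have hclosed : IsClosed (S ∩ Icc a b) := by
    rw [inter_comm]
    exact isClosed_Icc.isClosed_le (continuous_dist.comp_continuousOn (hcont.prodMk continuousOn_const))
      (continuousOn_const.mul (continuousOn_id.sub continuousOn_const))
  have hstep : ∀ t ∈ S ∩ Ico a b, S ∈ 𝓝[>] t := by
    rintro t ⟨htS, htab⟩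
    filter_upwards [nhdsWithin_le_of_mem (Icc_mem_nhdsGT_of_mem htab)
      (hφ t (Ico_subset_Icc_self htab)), self_mem_nhdsWithin] with u hu (htu : t < u)
    calc dist (φ u) (φ a) ≤ dist (φ u) (φ t) + dist (φ t) (φ a) := dist_triangle _ _ _
      _ ≤ K * (u - t) + K * (t - a) := by
        rw [Real.dist_eq, abs_of_pos (sub_pos.2 htu)] at hu
        exact add_le_add hu htS
      _ = K * (u - a) := by ring
  exact hclosed.Icc_subset_of_forall_mem_nhdsWithin (by simp [S]) hstep (right_mem_Icc.2 hab)

theorem Convex.lipschitzOnWith_of_eventually_dist_le {E Y : Type*} [NormedAddCommGroup E]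
    [NormedSpace ℝ E] [PseudoMetricSpace Y] {f : E → Y} {P : Set E} {K : ℝ≥0}
    (hP : Convex ℝ P) (hf : ∀ x ∈ P, ∀ᶠ y in 𝓝[P] x, dist (f y) (f x) ≤ K * dist y x) :
    LipschitzOnWith K f P := by
  refine lipschitzOnWith_iff_dist_le_mul.2 fun x hx y hy => ?_
  set γ : ℝ → E := ⇑(AffineMap.lineMap (k := ℝ) y x)
  have hγ : MapsTo γ (Icc 0 1) P := fun t ht => hP.lineMap_mem hy hx ht
  have hlocal : ∀ t ∈ Icc (0 : ℝ) 1, ∀ᶠ s in 𝓝[Icc 0 1] t,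
      dist (f (γ s)) (f (γ t)) ≤ (K * dist x y) * dist s t := fun t ht =>
    ((lipschitzWith_lineMap y x).continuous.continuousWithinAt.tendsto_nhdsWithin hγ).eventually
      (hf _ (hγ ht)) |>.mono fun s hs => hs.trans_eq <| by
        rw [dist_lineMap_lineMap, dist_comm y x]; ring
  simpa [γ] using dist_le_mul_of_eventually_dist_le zero_le_one hlocal

theorem piecewise_affine_lipschitz_general {n m : ℕ}
    (P : Set (EuclideanSpace ℝ (Fin n))) (hPconv : Convex ℝ P)
    (f : EuclideanSpace ℝ (Fin n) → EuclideanSpace ℝ (Fin m))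
    (r : ℕ) (C : Fin r → Set (EuclideanSpace ℝ (Fin n)))
    (hCcl : ∀ i, IsClosed (C i))
    (g : Fin r → (EuclideanSpace ℝ (Fin n) →ᵃ[ℝ] EuclideanSpace ℝ (Fin m)))
    (L : Fin r → NNReal)
    (hcover : P ⊆ ⋃ i, C i)
    (hLip : ∀ i, LipschitzWith (L i) (g i))
    (hagree : ∀ i, ∀ x ∈ C i ∩ P, f x = g i x) :
    LipschitzOnWith (Finset.univ.sup L) f P := by
  have hpiece : ∀ i, LipschitzOnWith (Finset.univ.sup L) f (C i ∩ P) := fun i =>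
    lipschitzOnWith_iff_dist_le_mul.2 fun x hx y hy => by
      rw [hagree i x hx, hagree i y hy]
      exact ((hLip i).weaken (Finset.le_sup (Finset.mem_univ i))).dist_le_mul x y
  exact hPconv.lipschitzOnWith_of_eventually_dist_le fun x hx =>
    eventually_dist_le_of_finite_closed_cover hCcl hcover hpiece hx

/-- Continuous piecewise affine functions on a convex domain are Lipschitz (the fact
underlying Corollary 4.1): if a function `f`, continuous on a nonempty convex set
`P` covered by finitely many closed sets `C₁, …, C_r`, agrees on each `C_i ∩ P`
with an affine map `g_i` that is Lipschitz with constant `L_i`, then `f` is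
Lipschitz on `P` with constant `max_i L_i`. -/
theorem piecewise_affine_lipschitz {n m : ℕ}
    (P : Set (EuclideanSpace ℝ (Fin n))) (hPne : P.Nonempty) (hPconv : Convex ℝ P)
    (f : EuclideanSpace ℝ (Fin n) → EuclideanSpace ℝ (Fin m))
    (hf : ContinuousOn f P)
    (r : ℕ) (C : Fin r → Set (EuclideanSpace ℝ (Fin n)))
    (hCcl : ∀ i, IsClosed (C i))
    (g : Fin r → (EuclideanSpace ℝ (Fin n) →ᵃ[ℝ] EuclideanSpace ℝ (Fin m)))
    (L : Fin r → NNReal)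
    (hcover : P ⊆ ⋃ i, C i)
    (hLip : ∀ i, LipschitzWith (L i) (g i))
    (hagree : ∀ i, ∀ x ∈ C i ∩ P, f x = g i x) :
    LipschitzOnWith (Finset.univ.sup L) f P :=
  piecewise_affine_lipschitz_general P hPconv f r C hCcl g L hcover hLip hagree
end
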